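/- Let (𝔉,𝒱)_E be an (𝔉,𝒱)_E-structure and T a term. Suppose 𝔉' ⊆ 𝔉 satisfies Sup_s(T) ⊆ 𝔉' and |𝔉'| ≤ s. Then R_{I(𝔉'∧E)}(T) = R_{I(Sup_s(T)∧E)}(T). -/

import Mathlib

attribute [local instance] Classical.propDecidable

/-- A literal is a variable together with a polarity (`true` = positive). -/
abbrev Clause (σ : Type) := Finset (σ × Bool)

/-- A CNF formula is a finite set of clauses. -/
abbrev CNF (σ : Type) := Finset (Clause σ)

/-- The variables occurring in a clause. -/
def clauseVars {σ : Type} [DecidableEq σ] (C : Clause σ) : Finset σ := C.image Prod.fst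

/-- The variables occurring in a CNF formula. -/
def cnfVars {σ : Type} [DecidableEq σ] (φ : CNF σ) : Finset σ := φ.sup clauseVars

/-- A (total) assignment satisfies a literal. -/
def litSat {σ : Type} (α : σ → Bool) (l : σ × Bool) : Prop := α l.1 = l.2

/-- A (total) assignment satisfies a clause. -/
def clauseSat {σ : Type} (α : σ → Bool) (C : Clause σ) : Prop := ∃ l ∈ C, litSat α l

/-- A (total) assignment satisfies a CNF formula. -/
def cnfSat {σ : Type} (α : σ → Bool) (φ : CNF σ) : Prop := ∀ C ∈ φ, clauseSat α C

/-- Multilinearization: replace every exponent by its minimum with `1`. -/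
noncomputable def mlin {σ 𝔽 : Type} [CommRing 𝔽] (p : MvPolynomial σ 𝔽) :
    MvPolynomial σ 𝔽 :=
  ∑ m ∈ p.support,
    MvPolynomial.monomial (Finsupp.mapRange (fun e => min e 1) (by simp) m) (p.coeff m)

/-- The polynomial translation of a clause: identifying true with `0`, the clause
`⋁_{x∈L⁺} x ∨ ⋁_{y∈L⁻} ¬y` becomes `∏_{x∈L⁺} x · ∏_{y∈L⁻} (1 - y)`. -/
noncomputable def clausePoly {σ : Type} (𝔽 : Type) [CommRing 𝔽] (C : Clause σ) :
    MvPolynomial σ 𝔽 :=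
  ∏ l ∈ C, if l.2 then MvPolynomial.X l.1 else 1 - MvPolynomial.X l.1
/-- An admissible total order on multilinear monomials (identified with finite sets of
variables): a strict linear order in which lower-degree monomials come first and which is
compatible with multiplication by monomials on disjoint sets of variables. -/
structure AdmissibleOrder (σ : Type) [DecidableEq σ] where
  lt : Finset σ → Finset σ → Prop
  irrefl : ∀ S, ¬ lt S S
  trans : ∀ {S T U : Finset σ}, lt S T → lt T U → lt S U
  total : ∀ S T, S ≠ T → lt S T ∨ lt T S
  degree_lt : ∀ S T : Finset σ, S.card < T.card → lt S T
  mul_lt : ∀ S T m : Finset σ, lt S T → Disjoint m (S ∪ T) → lt (m ∪ S) (m ∪ T)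

/-- `T` is the leading term of `Q` with respect to the admissible order `ord`. -/
def IsLeadTerm {σ 𝔽 : Type} [DecidableEq σ] [CommRing 𝔽] (ord : AdmissibleOrder σ)
    (Q T : MvPolynomial σ 𝔽) : Prop :=
  ∃ m ∈ Q.support, T = MvPolynomial.monomial m (Q.coeff m) ∧
    ∀ m' ∈ Q.support, m' ≠ m → ord.lt m'.support m.support

/-- A term `T` is reducible modulo a set `I` of polynomials if `T` is the leading term of
some member of `I`. -/
def Reducible {σ 𝔽 : Type} [DecidableEq σ] [CommRing 𝔽] (ord : AdmissibleOrder σ)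
    (I : Set (MvPolynomial σ 𝔽)) (T : MvPolynomial σ 𝔽) : Prop :=
  ∃ Q ∈ I, IsLeadTerm ord Q T

/-- `R` is the reduction of `P` modulo `I`: `R` is multilinear, `P - R ∈ I`, and every term
of `R` is irreducible modulo `I`. -/
def IsReduction {σ 𝔽 : Type} [DecidableEq σ] [CommRing 𝔽] (ord : AdmissibleOrder σ)
    (I : Set (MvPolynomial σ 𝔽)) (P R : MvPolynomial σ 𝔽) : Prop :=
  mlin R = R ∧ P - R ∈ I ∧
    ∀ m ∈ R.support, ¬ Reducible ord I (MvPolynomial.monomial m (R.coeff m))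

/-- The reduction operator `R_I` modulo `I` (well defined on multilinear polynomials when
`I` is an ideal of the multilinear ring). -/
noncomputable def redOp {σ 𝔽 : Type} [DecidableEq σ] [CommRing 𝔽] (ord : AdmissibleOrder σ)
    (I : Set (MvPolynomial σ 𝔽)) (P : MvPolynomial σ 𝔽) : MvPolynomial σ 𝔽 :=
  if h : ∃ R, IsReduction ord I P R then h.choose else 0

/-- A subset of the multilinear polynomial ring is an ideal of that ring: it consists of
multilinear polynomials, contains `0`, and is closed under addition and under multiplication
(followed by multilinearization) by arbitrary polynomials. -/
def IsMLIdeal {σ 𝔽 : Type} [CommRing 𝔽] (I : Set (MvPolynomial σ 𝔽)) : Prop :=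
  0 ∈ I ∧ (∀ p ∈ I, mlin p = p) ∧ (∀ p ∈ I, ∀ q ∈ I, p + q ∈ I) ∧
    (∀ p ∈ I, ∀ q : MvPolynomial σ 𝔽, mlin (q * p) ∈ I)

/-- The multilinear (squarefree) monomial with support `m`. -/
noncomputable def monoOf {σ : Type} [DecidableEq σ] (m : Finset σ) : σ →₀ ℕ :=
  ∑ x ∈ m, Finsupp.single x 1
/-- A partial assignment with domain `D` and values `α` respects the CNF formula `E`:
every clause of `E` sharing a variable with `D` is satisfied by the assignment (via a
literal whose variable lies in `D`). -/
def Respects {σ : Type} [DecidableEq σ] (D : Finset σ) (α : σ → Bool) (E : CNF σ) : Prop :=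
  ∀ C ∈ E, (clauseVars C ∩ D).Nonempty → ∃ l ∈ C, l.1 ∈ D ∧ α l.1 = l.2

/-- A variable set `V` respects `E` if some assignment with domain `V` respects `E`. -/
def VRespects {σ : Type} [DecidableEq σ] (V : Finset σ) (E : CNF σ) : Prop :=
  ∃ α : σ → Bool, Respects V α E

/-- The formula `F` is respectfully satisfiable by the variable set `V` (with respect to
`E`): some assignment with domain `V` satisfies `F` and respects `E`. -/
def RSat {σ : Type} [DecidableEq σ] (E F : CNF σ) (V : Finset σ) : Prop :=
  ∃ α : σ → Bool, Respects V α E ∧ ∀ C ∈ F, ∃ l ∈ C, l.1 ∈ V ∧ α l.1 = l.2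

/-- An `(𝔉,𝒱)_E`-structure: a CNF formula `Ecnf`, a family `fam` of CNF formulas, and a
family `vfam` of variable sets, each respecting `Ecnf`. -/
structure FVStructure (σ : Type) [DecidableEq σ] where
  Ecnf : CNF σ
  fam : Finset (CNF σ)
  vfam : Finset (Finset σ)
  vfam_respects : ∀ V ∈ vfam, VRespects V Ecnf

/-- `F` and `V` are neighbours: they share a variable. -/
def Nbr {σ : Type} [DecidableEq σ] (F : CNF σ) (V : Finset σ) : Prop :=
  (cnfVars F ∩ V).Nonempty

/-- `F` and `V` are respectful neighbours. -/
def RNbr {σ : Type} [DecidableEq σ] (E F : CNF σ) (V : Finset σ) : Prop :=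
  Nbr F V ∧ RSat E F V

/-- The respectful boundary of a subfamily `𝔛 ⊆ fam`: all `V ∈ vfam` that are a respectful
neighbour of some `F ∈ 𝔛` and not a neighbour of any other member of `𝔛`. -/
noncomputable def rbdry {σ : Type} [DecidableEq σ] (S : FVStructure σ)
    (𝔛 : Finset (CNF σ)) : Finset (Finset σ) :=
  S.vfam.filter fun V =>
    ∃ F ∈ 𝔛, RNbr S.Ecnf F V ∧ ∀ F' ∈ 𝔛, F' ≠ F → ¬ Nbr F' V

/-- A respectful `(s,δ,ξ)`-boundary expander. -/
def IsRBExpander {σ : Type} [DecidableEq σ] (S : FVStructure σ) (s : ℕ) (δ ξ : ℝ) : Prop :=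
  ∀ 𝔛 ⊆ S.fam, 𝔛.card ≤ s → δ * (𝔛.card : ℝ) - ξ ≤ ((rbdry S 𝔛).card : ℝ)

/-- `𝔛` is `(s,𝒱')`-contained: `𝔛 ⊆ fam`, `|𝔛| ≤ s` and `∂(𝔛) ⊆ 𝒱'`. -/
def Contained {σ : Type} [DecidableEq σ] (S : FVStructure σ) (s : ℕ)
    (𝒱' : Finset (Finset σ)) (𝔛 : Finset (CNF σ)) : Prop :=
  𝔛 ⊆ S.fam ∧ 𝔛.card ≤ s ∧ rbdry S 𝔛 ⊆ 𝒱'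

/-- The `s`-support of `𝒱'`: the union of all `(s,𝒱')`-contained subsets of `fam`. -/
noncomputable def suppV {σ : Type} [DecidableEq σ] (S : FVStructure σ) (s : ℕ)
    (𝒱' : Finset (Finset σ)) : Finset (CNF σ) :=
  S.fam.filter fun F => ∃ 𝔛, Contained S s 𝒱' 𝔛 ∧ F ∈ 𝔛

/-- The overlap of a family of variable sets: the maximum number of sets that contain any
single variable. -/
noncomputable def overlap {σ : Type} [Fintype σ] [DecidableEq σ]
    (𝒱 : Finset (Finset σ)) : ℕ :=
  Finset.univ.sup fun x : σ => (𝒱.filter fun V => x ∈ V).card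

/-- The neighbourhood `N(T)` of a (multilinear) monomial `m`: all `V ∈ vfam` meeting it. -/
noncomputable def nbrsM {σ : Type} [DecidableEq σ] (S : FVStructure σ) (m : Finset σ) :
    Finset (Finset σ) :=
  S.vfam.filter fun V => (m ∩ V).Nonempty

/-- The neighbourhood of a subfamily `𝔛 ⊆ fam`. -/
noncomputable def nbrsF {σ : Type} [DecidableEq σ] (S : FVStructure σ)
    (𝔛 : Finset (CNF σ)) : Finset (Finset σ) :=
  S.vfam.filter fun V => ∃ F ∈ 𝔛, (cnfVars F ∩ V).Nonempty

/-- The `s`-support `Sup_s(T)` of a term with monomial `m`, i.e. `Sup_s(N(T))`. -/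
noncomputable def suppM {σ : Type} [DecidableEq σ] (S : FVStructure σ) (s : ℕ)
    (m : Finset σ) : Finset (CNF σ) :=
  suppV S s (nbrsM S m)

/-- All clauses of the CNF formula `𝔛 ∧ E`. -/
noncomputable def clausesOf {σ : Type} [DecidableEq σ] (S : FVStructure σ)
    (𝔛 : Finset (CNF σ)) : CNF σ :=
  𝔛.sup id ∪ S.Ecnf
/-- The ideal `I(𝔛 ∧ E)` of the multilinear ring generated by the polynomial translations
of all clauses of the formulas in `𝔛` together with all clauses of `E`. -/
def idealOf {σ : Type} (𝔽 : Type) [Field 𝔽] [DecidableEq σ] (S : FVStructure σ)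
    (𝔛 : Finset (CNF σ)) : Set (MvPolynomial σ 𝔽) :=
  { P | ∃ q : Clause σ → MvPolynomial σ 𝔽,
      P = mlin (∑ C ∈ clausesOf S 𝔛, q C * clausePoly 𝔽 C) }

/-- The neighbourhood `N(P)` of a polynomial: all `V ∈ vfam` meeting a variable of `P`. -/
noncomputable def nbrsP {σ 𝔽 : Type} [DecidableEq σ] [CommRing 𝔽] (S : FVStructure σ)
    (P : MvPolynomial σ 𝔽) : Finset (Finset σ) :=
  S.vfam.filter fun V => (P.vars ∩ V).Nonempty

/-!
Peeling off the members of `𝔛` outside `Sup_s(T)` one at a time, each through a respectful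
boundary vertex `V ∉ N(T)` that it alone touches among the members still present, yields a partial
assignment `ρ` that respects `E`, satisfies every formula of `𝔛` outside `Sup_s(T)`, and touches
neither `T` nor the formulas of `Sup_s(T)`. Restricting by `ρ` therefore maps `I(𝔛 ∧ E)` into
`I(Sup_s(T) ∧ E)`, and it keeps the leading monomial of any polynomial whose leading monomial
avoids `dom ρ`. Reducing `T` modulo `I(Sup_s(T) ∧ E)` while restricting every polynomial used by
`ρ` gives a reduction `R` free of `dom ρ`; a term of `R` reducible modulo `I(𝔛 ∧ E)` would, after
restriction, be reducible modulo `I(Sup_s(T) ∧ E)`. So `R` is the reduction modulo both ideals,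
and reductions are unique.
-/

open MvPolynomial

section Multilinearization

variable {σ 𝔽 : Type} [CommRing 𝔽]

noncomputable def truncExp (m : σ →₀ ℕ) : σ →₀ ℕ :=
  Finsupp.mapRange (fun e => min e 1) (by simp) m

@[simp]
lemma truncExp_apply (m : σ →₀ ℕ) (x : σ) : truncExp m x = min (m x) 1 := rfl

lemma support_truncExp (m : σ →₀ ℕ) : (truncExp m).support = m.support := by
  ext x
  simp only [Finsupp.mem_support_iff, truncExp_apply]
  omega

lemma truncExp_eq_self {m : σ →₀ ℕ} (h : ∀ x, m x ≤ 1) : truncExp m = m := by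
  ext x
  have := h x
  simp only [truncExp_apply]
  omega

lemma truncExp_add_truncExp (a b : σ →₀ ℕ) : truncExp (a + truncExp b) = truncExp (a + b) := by
  ext x
  simp only [truncExp_apply, Finsupp.add_apply]
  omega

lemma filter_truncExp (m : σ →₀ ℕ) (P : σ → Prop) [DecidablePred P] :
    (truncExp m).filter P = truncExp (m.filter P) := by
  ext x
  by_cases hx : P x <;> simp [hx]

lemma mlin_def (p : MvPolynomial σ 𝔽) :
    mlin p = ∑ m ∈ p.support, monomial (truncExp m) (p.coeff m) := rfl

lemma mlin_eq_sum_of_support_subset {p : MvPolynomial σ 𝔽} {A : Finset (σ →₀ ℕ)}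
    (hA : p.support ⊆ A) : mlin p = ∑ m ∈ A, monomial (truncExp m) (p.coeff m) :=
  Finset.sum_subset hA fun m _ hm => by rw [notMem_support_iff.mp hm, map_zero]

lemma mlin_add (p q : MvPolynomial σ 𝔽) : mlin (p + q) = mlin p + mlin q := by
  classical
  rw [mlin_eq_sum_of_support_subset support_add,
    mlin_eq_sum_of_support_subset (Finset.subset_union_left (s₂ := q.support)),
    mlin_eq_sum_of_support_subset (Finset.subset_union_right (s₁ := p.support)),
    ← Finset.sum_add_distrib]
  simp only [coeff_add, map_add]

lemma mlin_smul (c : 𝔽) (p : MvPolynomial σ 𝔽) : mlin (c • p) = c • mlin p := by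
  rw [mlin_eq_sum_of_support_subset support_smul, mlin_def, Finset.smul_sum]
  simp only [coeff_smul, ← map_smul]

lemma mlin_zero : mlin (0 : MvPolynomial σ 𝔽) = 0 := by
  simpa using mlin_smul (0 : 𝔽) 0

lemma mlin_sub (p q : MvPolynomial σ 𝔽) : mlin (p - q) = mlin p - mlin q := by
  rw [sub_eq_add_neg, mlin_add, ← neg_one_smul 𝔽 q, mlin_smul, neg_one_smul, ← sub_eq_add_neg]

lemma mlin_sum {ι : Type*} (s : Finset ι) (f : ι → MvPolynomial σ 𝔽) :
    mlin (∑ i ∈ s, f i) = ∑ i ∈ s, mlin (f i) :=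
  map_sum (AddMonoidHom.mk' mlin mlin_add) f s

lemma mlin_monomial (m : σ →₀ ℕ) (c : 𝔽) : mlin (monomial m c) = monomial (truncExp m) c := by
  rw [mlin_eq_sum_of_support_subset support_monomial_subset, Finset.sum_singleton,
    coeff_monomial, if_pos rfl]

lemma support_sum_monomial_subset [DecidableEq σ] {ι : Type*} (s : Finset ι) (f : ι → σ →₀ ℕ)
    (c : ι → 𝔽) :
    (∑ i ∈ s, monomial (f i) (c i)).support ⊆ s.image f :=
  support_sum.trans <| Finset.biUnion_subset.mpr fun _ hi =>
    support_monomial_subset.trans (Finset.singleton_subset_iff.mpr (Finset.mem_image_of_mem f hi))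

lemma support_mlin_subset [DecidableEq σ] (p : MvPolynomial σ 𝔽) :
    (mlin p).support ⊆ p.support.image truncExp :=
  support_sum_monomial_subset _ _ _

lemma le_one_of_mem_support_mlin {p : MvPolynomial σ 𝔽} {n : σ →₀ ℕ}
    (hn : n ∈ (mlin p).support) (x : σ) : n x ≤ 1 := by
  classical
  obtain ⟨m, -, rfl⟩ := Finset.mem_image.mp (support_mlin_subset p hn)
  simp

lemma le_one_of_mlin_eq {p : MvPolynomial σ 𝔽} (hp : mlin p = p) {n : σ →₀ ℕ}
    (hn : n ∈ p.support) (x : σ) : n x ≤ 1 :=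
  le_one_of_mem_support_mlin (hp ▸ hn) x

lemma eq_of_support_eq_of_mlin_eq {p : MvPolynomial σ 𝔽} (hp : mlin p = p) {m n : σ →₀ ℕ}
    (hm : m ∈ p.support) (hn : n ∈ p.support) (h : m.support = n.support) : m = n := by
  ext x
  have := le_one_of_mlin_eq hp hm x
  have := le_one_of_mlin_eq hp hn x
  have := congrArg (x ∈ ·) h
  simp only [Finsupp.mem_support_iff, eq_iff_iff] at this
  omega

lemma mlin_mlin (p : MvPolynomial σ 𝔽) : mlin (mlin p) = mlin p := by
  rw [mlin_def p, mlin_sum]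
  refine Finset.sum_congr rfl fun m _ => ?_
  rw [mlin_monomial, truncExp_eq_self fun x => by simp]

lemma mlin_mul_mlin (q p : MvPolynomial σ 𝔽) : mlin (q * mlin p) = mlin (q * p) := by
  induction p using MvPolynomial.induction_on' with
  | monomial b c =>
    rw [mlin_monomial]
    induction q using MvPolynomial.induction_on' with
    | monomial a d => rw [monomial_mul, monomial_mul, mlin_monomial, mlin_monomial,
        truncExp_add_truncExp]
    | add q₁ q₂ h₁ h₂ => rw [add_mul, add_mul, mlin_add, mlin_add, h₁, h₂]
  | add p₁ p₂ h₁ h₂ => rw [mlin_add, mul_add, mul_add, mlin_add, mlin_add, h₁, h₂]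

end Multilinearization

namespace AdmissibleOrder

variable {σ : Type} [DecidableEq σ] (ord : AdmissibleOrder σ)

lemma card_le_of_lt {S T : Finset σ} (h : ord.lt S T) : S.card ≤ T.card := by
  by_contra hc
  exact ord.irrefl S (ord.trans h (ord.degree_lt _ _ (not_le.mp hc)))

lemma lt_of_subset_of_lt {S S' M : Finset σ} (hsub : S ⊆ S') (h : ord.lt S' M) : ord.lt S M := by
  rcases (Finset.card_le_card hsub).lt_or_eq with hlt | heq
  · exact ord.degree_lt _ _ (hlt.trans_le (ord.card_le_of_lt h))
  · rwa [Finset.eq_of_subset_of_card_le hsub heq.ge]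

variable [Fintype σ]

noncomputable def rank (S : Finset σ) : ℕ := (Finset.univ.filter fun B => ord.lt B S).card

lemma rank_lt_rank {S T : Finset σ} (h : ord.lt S T) : ord.rank S < ord.rank T := by
  refine Finset.card_lt_card ⟨fun B hB => ?_, fun hsub => ?_⟩
  · simp only [Finset.mem_filter, Finset.mem_univ, true_and] at hB ⊢
    exact ord.trans hB h
  · have := @hsub S (by simpa using h)
    exact ord.irrefl S (by simpa using this)

lemma rank_lt_card_add_one (S : Finset σ) : ord.rank S < Fintype.card (Finset σ) + 1 :=
  Nat.lt_succ_of_le (Finset.card_le_univ _)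

lemma lt_of_rank_le {S T : Finset σ} (hne : S ≠ T) (h : ord.rank S ≤ ord.rank T) : ord.lt S T :=
  (ord.total S T hne).resolve_right fun h' => (ord.rank_lt_rank h').not_ge h

end AdmissibleOrder

section LeadMonomial

variable {σ 𝔽 : Type} [DecidableEq σ] [CommRing 𝔽] (ord : AdmissibleOrder σ)

def IsLeadMonomial (Q : MvPolynomial σ 𝔽) (n : σ →₀ ℕ) : Prop :=
  n ∈ Q.support ∧ ∀ m ∈ Q.support, m ≠ n → ord.lt m.support n.support

lemma exists_max_monomial [Fintype σ] {p : MvPolynomial σ 𝔽} (hp : mlin p = p)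
    {A : Finset (σ →₀ ℕ)} (hA : A ⊆ p.support) (hne : A.Nonempty) :
    ∃ n ∈ A, ∀ m ∈ A, m ≠ n → ord.lt m.support n.support := by
  obtain ⟨n, hn, hmax⟩ := A.exists_max_image (fun m => ord.rank m.support) hne
  exact ⟨n, hn, fun m hm hmn => ord.lt_of_rank_le
    (fun h => hmn (eq_of_support_eq_of_mlin_eq hp (hA hm) (hA hn) h)) (hmax m hm)⟩

lemma exists_isLeadMonomial [Fintype σ] {p : MvPolynomial σ 𝔽} (hp : mlin p = p) (h0 : p ≠ 0) :
    ∃ n, IsLeadMonomial ord p n :=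
  let ⟨n, hn, hmax⟩ := exists_max_monomial ord hp subset_rfl (support_nonempty.mpr h0)
  ⟨n, hn, hmax⟩

end LeadMonomial

section Restriction

variable {σ 𝔽 : Type} [CommRing 𝔽]

def truthValue (α : σ → Bool) (x : σ) : 𝔽 := if α x then 0 else 1

lemma isIdempotentElem_truthValue (α : σ → Bool) (x : σ) :
    IsIdempotentElem (truthValue α x : 𝔽) := by
  unfold truthValue
  split <;> simp [IsIdempotentElem]

lemma disjoint_support_of_disjoint_vars {p : MvPolynomial σ 𝔽} {D : Finset σ}
    (h : Disjoint p.vars D) {m : σ →₀ ℕ} (hm : m ∈ p.support) : Disjoint m.support D :=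
  Finset.disjoint_left.mpr fun x hx =>
    Finset.disjoint_left.mp h ((mem_vars_iff_mem_support x).mpr ⟨m, hm, hx⟩)

variable [DecidableEq σ]

noncomputable def restrictPoly (D : Finset σ) (α : σ → Bool) :
    MvPolynomial σ 𝔽 →ₐ[𝔽] MvPolynomial σ 𝔽 :=
  aeval fun x => if x ∈ D then C (truthValue α x) else X x

variable {D : Finset σ} {α : σ → Bool}

lemma restrictPoly_X_of_mem {x : σ} (h : x ∈ D) :
    restrictPoly D α (X x) = C (truthValue α x : 𝔽) := by
  simp [restrictPoly, h]

lemma restrictPoly_monomial (m : σ →₀ ℕ) (c : 𝔽) :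
    restrictPoly D α (monomial m c) =
      monomial (m.filter (· ∉ D)) (c * ∏ x ∈ m.support.filter (· ∈ D), truthValue α x) := by
  have hD : ∏ x ∈ m.support.filter (· ∈ D), (if x ∈ D then C (truthValue α x) else X x) ^ m x =
      C (∏ x ∈ m.support.filter (· ∈ D), truthValue α x : 𝔽) := by
    rw [map_prod]
    refine Finset.prod_congr rfl fun x hx => ?_
    obtain ⟨hxm, hxD⟩ := Finset.mem_filter.mp hx
    rw [if_pos hxD, ← map_pow, (isIdempotentElem_truthValue α x).pow_eq
      (Finsupp.mem_support_iff.mp hxm)]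
  have hnotD : ∏ x ∈ m.support.filter (· ∉ D), (if x ∈ D then C (truthValue α x) else X x) ^ m x =
      monomial (m.filter (· ∉ D)) (1 : 𝔽) := by
    rw [monomial_eq, C_1, one_mul, Finsupp.prod, Finsupp.support_filter]
    refine Finset.prod_congr rfl fun x hx => ?_
    have hxD := (Finset.mem_filter.mp hx).2
    rw [if_neg hxD, Finsupp.filter_apply_pos (· ∉ D) m hxD]
  rw [restrictPoly, aeval_monomial, Finsupp.prod,
    ← Finset.prod_filter_mul_prod_filter_not m.support (· ∈ D), hD, hnotD, algebraMap_eq,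
    ← mul_assoc, ← C_mul, C_mul_monomial, mul_one]

lemma restrictPoly_eq_sum (p : MvPolynomial σ 𝔽) :
    restrictPoly D α p = ∑ m ∈ p.support,
      monomial (m.filter (· ∉ D)) (p.coeff m * ∏ x ∈ m.support.filter (· ∈ D), truthValue α x) := by
  conv_lhs => rw [p.as_sum, map_sum]
  simp only [restrictPoly_monomial]

lemma support_restrictPoly_subset (p : MvPolynomial σ 𝔽) :
    (restrictPoly D α p).support ⊆ p.support.image (·.filter (· ∉ D)) := by
  rw [restrictPoly_eq_sum]
  exact support_sum_monomial_subset (𝔽 := 𝔽) _ _ _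

lemma disjoint_vars_restrictPoly (p : MvPolynomial σ 𝔽) : Disjoint (restrictPoly D α p).vars D := by
  refine Finset.disjoint_left.mpr fun x hx hxD => ?_
  obtain ⟨d, hd, hxd⟩ := (mem_vars_iff_mem_support x).mp hx
  obtain ⟨m, -, rfl⟩ := Finset.mem_image.mp (support_restrictPoly_subset p hd)
  rw [Finsupp.support_filter, Finset.mem_filter] at hxd
  exact hxd.2 hxD

lemma filter_notMem_eq_self {n : σ →₀ ℕ} (hn : Disjoint n.support D) : n.filter (· ∉ D) = n :=
  (Finsupp.filter_eq_self_iff _ _).mpr fun _ hx =>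
    Finset.disjoint_left.mp hn (Finsupp.mem_support_iff.mpr hx)

lemma filter_mem_support_eq_empty {n : σ →₀ ℕ} (hn : Disjoint n.support D) :
    n.support.filter (· ∈ D) = ∅ :=
  Finset.filter_eq_empty_iff.mpr fun _ hx => Finset.disjoint_left.mp hn hx

lemma restrictPoly_eq_self {p : MvPolynomial σ 𝔽} (h : Disjoint p.vars D) :
    restrictPoly D α p = p := by
  conv_rhs => rw [p.as_sum]
  rw [restrictPoly_eq_sum]
  refine Finset.sum_congr rfl fun m hm => ?_
  have hmD := disjoint_support_of_disjoint_vars h hm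
  rw [filter_notMem_eq_self hmD, filter_mem_support_eq_empty hmD, Finset.prod_empty, mul_one]

lemma restrictPoly_mlin (p : MvPolynomial σ 𝔽) :
    restrictPoly D α (mlin p) = mlin (restrictPoly D α p) := by
  rw [mlin_def, map_sum, restrictPoly_eq_sum, mlin_sum]
  refine Finset.sum_congr rfl fun m _ => ?_
  rw [restrictPoly_monomial, mlin_monomial, support_truncExp, filter_truncExp]

variable (ord : AdmissibleOrder σ)

lemma IsLeadMonomial.coeff_restrictPoly {Q : MvPolynomial σ 𝔽} {n : σ →₀ ℕ}
    (h : IsLeadMonomial ord Q n) (hn : Disjoint n.support D) :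
    (restrictPoly D α Q).coeff n = Q.coeff n := by
  rw [restrictPoly_eq_sum, coeff_sum, Finset.sum_eq_single_of_mem n h.1, coeff_monomial,
    if_pos (filter_notMem_eq_self hn), filter_mem_support_eq_empty hn, Finset.prod_empty, mul_one]
  intro m hm hmn
  rw [coeff_monomial, if_neg]
  intro hfilter
  have hsub : n.support ⊆ m.support := by
    rw [← hfilter, Finsupp.support_filter]
    exact Finset.filter_subset _ _
  exact ord.irrefl _ (ord.lt_of_subset_of_lt hsub (h.2 m hm hmn))

lemma IsLeadMonomial.restrictPoly {Q : MvPolynomial σ 𝔽} {n : σ →₀ ℕ}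
    (h : IsLeadMonomial ord Q n) (hn : Disjoint n.support D) :
    IsLeadMonomial ord (restrictPoly D α Q) n := by
  refine ⟨?_, fun n' hn' hne => ?_⟩
  · rw [mem_support_iff, h.coeff_restrictPoly ord hn]
    exact mem_support_iff.mp h.1
  · obtain ⟨m, hm, rfl⟩ := Finset.mem_image.mp (support_restrictPoly_subset Q hn')
    have hmn : m ≠ n := by
      rintro rfl
      exact hne (filter_notMem_eq_self hn)
    refine ord.lt_of_subset_of_lt ?_ (h.2 m hm hmn)
    rw [Finsupp.support_filter]
    exact Finset.filter_subset _ _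

end Restriction

section Reduction

variable {σ 𝔽 : Type} [Field 𝔽] {I J : Set (MvPolynomial σ 𝔽)}

namespace IsMLIdeal

lemma mlin_eq (hI : IsMLIdeal I) {p : MvPolynomial σ 𝔽} (hp : p ∈ I) : mlin p = p := hI.2.1 p hp

lemma add_mem (hI : IsMLIdeal I) {p q : MvPolynomial σ 𝔽} (hp : p ∈ I) (hq : q ∈ I) :
    p + q ∈ I :=
  hI.2.2.1 p hp q hq

lemma smul_mem (hI : IsMLIdeal I) (c : 𝔽) {p : MvPolynomial σ 𝔽} (hp : p ∈ I) : c • p ∈ I := by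
  simpa only [C_mul', mlin_smul, hI.mlin_eq hp] using hI.2.2.2 p hp (C c)

lemma sub_mem (hI : IsMLIdeal I) {p q : MvPolynomial σ 𝔽} (hp : p ∈ I) (hq : q ∈ I) :
    p - q ∈ I := by
  simpa only [neg_one_smul, ← sub_eq_add_neg] using hI.add_mem hp (hI.smul_mem (-1) hq)

end IsMLIdeal

variable [DecidableEq σ] (ord : AdmissibleOrder σ)

def IsReducibleMonomial (I : Set (MvPolynomial σ 𝔽)) (n : σ →₀ ℕ) : Prop :=
  ∃ Q ∈ I, IsLeadMonomial ord Q n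

lemma IsLeadMonomial.smul {Q : MvPolynomial σ 𝔽} {n : σ →₀ ℕ} (h : IsLeadMonomial ord Q n)
    {c : 𝔽} (hc : c ≠ 0) : IsLeadMonomial ord (c • Q) n := by
  simpa only [IsLeadMonomial, support_smul_eq hc] using h

lemma Reducible.isReducibleMonomial {n : σ →₀ ℕ} {c : 𝔽} (hc : c ≠ 0)
    (h : Reducible ord I (monomial n c)) : IsReducibleMonomial ord I n := by
  obtain ⟨Q, hQ, m, hm, heq, hlt⟩ := h
  obtain ⟨rfl, -⟩ | ⟨hc0, -⟩ := (monomial_eq_monomial_iff _ _ _ _).mp heq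
  · exact ⟨Q, hQ, hm, hlt⟩
  · exact absurd hc0 hc

lemma reducible_monomial_iff (hI : IsMLIdeal I) {n : σ →₀ ℕ} {c : 𝔽} (hc : c ≠ 0) :
    Reducible ord I (monomial n c) ↔ IsReducibleMonomial ord I n := by
  refine ⟨Reducible.isReducibleMonomial ord hc, ?_⟩
  · rintro ⟨Q, hQ, hlead⟩
    have hQn : Q.coeff n ≠ 0 := mem_support_iff.mp hlead.1
    have hd : c / Q.coeff n ≠ 0 := div_ne_zero hc hQn
    refine ⟨(c / Q.coeff n) • Q, hI.smul_mem _ hQ, n, (hlead.smul ord hd).1, ?_,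
      (hlead.smul ord hd).2⟩
    rw [coeff_smul, smul_eq_mul, div_mul_cancel₀ _ hQn]

lemma exists_mem_lead_disjoint (hI : IsMLIdeal I) {D : Finset σ} {α : σ → Bool}
    (hstab : ∀ Q ∈ I, restrictPoly D α Q ∈ I) {n : σ →₀ ℕ} (hred : IsReducibleMonomial ord I n)
    (hn : Disjoint n.support D) (c : 𝔽) :
    ∃ Q ∈ I, Disjoint Q.vars D ∧ Q.coeff n = c ∧
      ∀ m ∈ Q.support, m ≠ n → ord.lt m.support n.support := by
  obtain ⟨Q, hQ, hlead⟩ := hred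
  have hQn : Q.coeff n ≠ 0 := mem_support_iff.mp hlead.1
  have hlead' := hlead.restrictPoly ord (α := α) hn
  refine ⟨restrictPoly D α ((c / Q.coeff n) • Q), hstab _ (hI.smul_mem _ hQ),
    disjoint_vars_restrictPoly _, ?_, fun m hm hmn => ?_⟩
  · rw [map_smul, coeff_smul, hlead.coeff_restrictPoly ord hn, smul_eq_mul,
      div_mul_cancel₀ _ hQn]
  · rw [map_smul] at hm
    exact hlead'.2 m (support_smul hm) hmn

lemma isReduction_of_forall_not_isReducibleMonomial (hI : IsMLIdeal I) {P R : MvPolynomial σ 𝔽}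
    (hR : mlin R = R) (hPR : P - R ∈ I) (h : ∀ m ∈ R.support, ¬ IsReducibleMonomial ord I m) :
    IsReduction ord I P R :=
  ⟨hR, hPR, fun m hm hred =>
    h m hm ((reducible_monomial_iff ord hI (mem_support_iff.mp hm)).mp hred)⟩

lemma IsReduction.of_restrictPoly_mem {D : Finset σ} {α : σ → Bool} (hI : IsMLIdeal I)
    (hIJ : I ⊆ J) (hJI : ∀ Q ∈ J, restrictPoly D α Q ∈ I) {P R : MvPolynomial σ 𝔽}
    (h : IsReduction ord I P R) (hRD : Disjoint R.vars D) : IsReduction ord J P R := by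
  refine ⟨h.1, hIJ h.2.1, fun m hm hred => ?_⟩
  have hc : R.coeff m ≠ 0 := mem_support_iff.mp hm
  obtain ⟨Q, hQ, hlead⟩ := hred.isReducibleMonomial ord hc
  exact h.2.2 m hm <| (reducible_monomial_iff ord hI hc).mpr
    ⟨_, hJI Q hQ, hlead.restrictPoly ord (disjoint_support_of_disjoint_vars hRD hm)⟩

variable [Fintype σ]

lemma IsReduction.unique (hI : IsMLIdeal I) {P R R' : MvPolynomial σ 𝔽}
    (h : IsReduction ord I P R) (h' : IsReduction ord I P R') : R = R' := by
  by_contra hne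
  have hdI : R - R' ∈ I := by simpa using hI.sub_mem h'.2.1 h.2.1
  obtain ⟨n, hlead⟩ := exists_isLeadMonomial ord (hI.mlin_eq hdI) (sub_ne_zero.mpr hne)
  have hcoeff : R.coeff n - R'.coeff n ≠ 0 := by
    simpa only [coeff_sub] using mem_support_iff.mp hlead.1
  by_cases hR : R.coeff n = 0
  · have hR' : R'.coeff n ≠ 0 := by simpa [hR] using hcoeff
    exact h'.2.2 n (mem_support_iff.mpr hR')
      ((reducible_monomial_iff ord hI hR').mpr ⟨_, hdI, hlead⟩)
  · exact h.2.2 n (mem_support_iff.mpr hR) ((reducible_monomial_iff ord hI hR).mpr ⟨_, hdI, hlead⟩)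

lemma redOp_eq (hI : IsMLIdeal I) {P R : MvPolynomial σ 𝔽} (h : IsReduction ord I P R) :
    redOp ord I P = R := by
  have hex : ∃ R, IsReduction ord I P R := ⟨R, h⟩
  rw [redOp, dif_pos hex]
  exact hex.choose_spec.unique ord hI h

lemma exists_isReduction_disjoint (hI : IsMLIdeal I) {D : Finset σ} {α : σ → Bool}
    (hstab : ∀ Q ∈ I, restrictPoly D α Q ∈ I) {P : MvPolynomial σ 𝔽} (hP : mlin P = P)
    (hPD : Disjoint P.vars D) : ∃ R, IsReduction ord I P R ∧ Disjoint R.vars D := by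
  suffices key : ∀ N : ℕ, ∀ R, mlin R = R → P - R ∈ I → Disjoint R.vars D →
      (∀ m ∈ R.support, IsReducibleMonomial ord I m → ord.rank m.support < N) →
      ∃ R, IsReduction ord I P R ∧ Disjoint R.vars D from
    key _ P hP (by simpa using hI.1) hPD fun m _ _ => ord.rank_lt_card_add_one m.support
  intro N
  induction N with
  | zero => exact fun R hR hPR hRD hbound => ⟨R,
      isReduction_of_forall_not_isReducibleMonomial ord hI hR hPR fun m hm hred =>
        Nat.not_lt_zero _ (hbound m hm hred), hRD⟩
  | succ N ih =>
    intro R hR hPR hRD hbound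
    by_cases hred : ∃ m ∈ R.support, IsReducibleMonomial ord I m
    swap
    · push Not at hred
      exact ⟨R, isReduction_of_forall_not_isReducibleMonomial ord hI hR hPR hred, hRD⟩
    obtain ⟨n, hnA, hmax⟩ := exists_max_monomial ord hR (Finset.filter_subset _ R.support)
      (let ⟨m, hm, h⟩ := hred; ⟨m, Finset.mem_filter.mpr ⟨hm, h⟩⟩)
    obtain ⟨hnR, hnred⟩ := Finset.mem_filter.mp hnA
    obtain ⟨Q, hQ, hQD, hQn, hQlt⟩ := exists_mem_lead_disjoint ord hI hstab hnred
      (disjoint_support_of_disjoint_vars hRD hnR) (R.coeff n)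
    refine ih (R - Q) (by rw [mlin_sub, hR, hI.mlin_eq hQ]) ?_
      (Disjoint.mono_left (vars_sub_subset R) (Finset.disjoint_union_left.mpr ⟨hRD, hQD⟩)) ?_
    · simpa only [sub_sub_eq_add_sub, add_sub_right_comm] using hI.add_mem hPR hQ
    · intro m hm hmred
      have hmn : m ≠ n := by
        rintro rfl
        exact mem_support_iff.mp hm (by rw [coeff_sub, hQn, sub_self])
      have hlt : ord.lt m.support n.support := by
        rcases Finset.mem_union.mp (support_sub σ R Q hm) with h | h
        · exact hmax m (Finset.mem_filter.mpr ⟨h, hmred⟩) hmn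
        · exact hQlt m h hmn
      exact (ord.rank_lt_rank hlt).trans_le (Nat.lt_succ_iff.mp (hbound n hnR hnred))

end Reduction

section ClauseIdeal

variable {σ 𝔽 : Type} [DecidableEq σ] [Field 𝔽]

def ClauseSatOn (D : Finset σ) (α : σ → Bool) (C : Clause σ) : Prop :=
  ∃ l ∈ C, l.1 ∈ D ∧ α l.1 = l.2

lemma clauseVars_subset_cnfVars {C : Clause σ} {F : CNF σ} (h : C ∈ F) :
    clauseVars C ⊆ cnfVars F :=
  Finset.le_sup (f := clauseVars) h

lemma vars_clausePoly_subset (C : Clause σ) : (clausePoly 𝔽 C).vars ⊆ clauseVars C := by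
  refine (vars_prod _).trans (Finset.biUnion_subset.mpr fun l hl => ?_)
  have hl' : (if l.2 then X l.1 else 1 - X l.1 : MvPolynomial σ 𝔽).vars ⊆ {l.1} := by
    split
    · rw [vars_X]
    · exact (vars_sub_subset _).trans (by simp [vars_X])
  exact hl'.trans (Finset.singleton_subset_iff.mpr (Finset.mem_image_of_mem _ hl))

variable {D : Finset σ} {α : σ → Bool} {C : Clause σ}

lemma restrictPoly_clausePoly_of_disjoint (h : Disjoint (clauseVars C) D) :
    restrictPoly D α (clausePoly 𝔽 C) = clausePoly 𝔽 C :=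
  restrictPoly_eq_self (h.mono_left (vars_clausePoly_subset C))

lemma restrictPoly_clausePoly_of_clauseSatOn (h : ClauseSatOn D α C) :
    restrictPoly D α (clausePoly 𝔽 C) = 0 := by
  obtain ⟨l, hl, hlD, hlα⟩ := h
  rw [clausePoly, map_prod]
  refine Finset.prod_eq_zero hl ?_
  cases hl2 : l.2 <;> simp [hl2, restrictPoly_X_of_mem hlD, truthValue, hlα]

variable (S : FVStructure σ)

lemma mem_clausesOf {𝔜 : Finset (CNF σ)} :
    C ∈ clausesOf S 𝔜 ↔ (∃ F ∈ 𝔜, C ∈ F) ∨ C ∈ S.Ecnf := by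
  simp [clausesOf, Finset.mem_sup]

lemma clausesOf_mono {𝔜 𝔜' : Finset (CNF σ)} (h : 𝔜 ⊆ 𝔜') : clausesOf S 𝔜 ⊆ clausesOf S 𝔜' :=
  Finset.union_subset_union (Finset.sup_mono h) subset_rfl

lemma mlin_sum_mem_idealOf {𝔜 : Finset (CNF σ)} {K : Finset (Clause σ)}
    (hK : K ⊆ clausesOf S 𝔜) (q : Clause σ → MvPolynomial σ 𝔽) :
    mlin (∑ C ∈ K, q C * clausePoly 𝔽 C) ∈ idealOf 𝔽 S 𝔜 := by
  refine ⟨fun C => if C ∈ K then q C else 0, ?_⟩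
  simp only [ite_mul, zero_mul, Finset.sum_ite_mem, Finset.inter_eq_right.mpr hK]

lemma idealOf_mono {𝔜 𝔜' : Finset (CNF σ)} (h : 𝔜 ⊆ 𝔜') : idealOf 𝔽 S 𝔜 ⊆ idealOf 𝔽 S 𝔜' := by
  rintro _ ⟨q, rfl⟩
  exact mlin_sum_mem_idealOf S (clausesOf_mono S h) q

lemma isMLIdeal_idealOf (𝔜 : Finset (CNF σ)) : IsMLIdeal (idealOf 𝔽 S 𝔜) := by
  refine ⟨⟨0, by simp [mlin_zero]⟩, ?_, ?_, ?_⟩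
  · rintro _ ⟨q, rfl⟩
    exact mlin_mlin _
  · rintro _ ⟨q, rfl⟩ _ ⟨q', rfl⟩
    exact ⟨q + q', by simp only [← mlin_add, ← Finset.sum_add_distrib, Pi.add_apply, add_mul]⟩
  · rintro _ ⟨q, rfl⟩ r
    exact ⟨fun C => r * q C, by simp only [mlin_mul_mlin, Finset.mul_sum, mul_assoc]⟩

lemma restrictPoly_mem_idealOf {𝔛 𝔜 : Finset (CNF σ)} (hresp : Respects D α S.Ecnf)
    (h𝔜 : ∀ F ∈ 𝔜, Disjoint (cnfVars F) D)
    (h𝔛 : ∀ F ∈ 𝔛, F ∉ 𝔜 → ∀ C ∈ F, ClauseSatOn D α C)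
    {P : MvPolynomial σ 𝔽} (hP : P ∈ idealOf 𝔽 S 𝔛) : restrictPoly D α P ∈ idealOf 𝔽 S 𝔜 := by
  obtain ⟨q, rfl⟩ := hP
  have hsat : ∀ C ∈ clausesOf S 𝔛, ¬ Disjoint (clauseVars C) D → ClauseSatOn D α C := by
    intro C hC hCD
    rcases (mem_clausesOf S).mp hC with ⟨F, hF, hCF⟩ | hCE
    · by_cases hF𝔜 : F ∈ 𝔜
      · exact absurd ((h𝔜 F hF𝔜).mono_left (clauseVars_subset_cnfVars hCF)) hCD
      · exact h𝔛 F hF hF𝔜 C hCF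
    · exact hresp C hCE (Finset.not_disjoint_iff_nonempty_inter.mp hCD)
  have hsub : (clausesOf S 𝔛).filter (fun C => Disjoint (clauseVars C) D) ⊆ clausesOf S 𝔜 := by
    intro C hC
    obtain ⟨hC, hCD⟩ := Finset.mem_filter.mp hC
    rcases (mem_clausesOf S).mp hC with ⟨F, hF, hCF⟩ | hCE
    · by_cases hF𝔜 : F ∈ 𝔜
      · exact (mem_clausesOf S).mpr (Or.inl ⟨F, hF𝔜, hCF⟩)
      · obtain ⟨l, hl, hlD, -⟩ := h𝔛 F hF hF𝔜 C hCF
        exact absurd hCD (Finset.not_disjoint_iff.mpr ⟨l.1, Finset.mem_image_of_mem _ hl, hlD⟩)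
    · exact (mem_clausesOf S).mpr (Or.inr hCE)
  have hkilled : ∑ C ∈ (clausesOf S 𝔛).filter (fun C => ¬ Disjoint (clauseVars C) D),
      restrictPoly D α (q C * clausePoly 𝔽 C) = 0 := Finset.sum_eq_zero fun C hC => by
    obtain ⟨hC, hCD⟩ := Finset.mem_filter.mp hC
    rw [map_mul, restrictPoly_clausePoly_of_clauseSatOn (hsat C hC hCD), mul_zero]
  rw [restrictPoly_mlin, map_sum,
    ← Finset.sum_filter_add_sum_filter_not _ (fun C => Disjoint (clauseVars C) D), hkilled,
    add_zero]
  convert mlin_sum_mem_idealOf S hsub (fun C => restrictPoly D α (q C)) using 2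
  refine Finset.sum_congr rfl fun C hC => ?_
  rw [map_mul, restrictPoly_clausePoly_of_disjoint (Finset.mem_filter.mp hC).2]

end ClauseIdeal

section Peeling

variable {σ : Type} [DecidableEq σ] {V D : Finset σ} {α ρ : σ → Bool}

lemma ClauseSatOn.union_piecewise_left {C : Clause σ} (h : ClauseSatOn V α C) :
    ClauseSatOn (V ∪ D) (V.piecewise α ρ) C :=
  let ⟨l, hl, hlV, hlα⟩ := h
  ⟨l, hl, Finset.mem_union_left _ hlV, by rw [Finset.piecewise_eq_of_mem _ _ _ hlV, hlα]⟩

lemma ClauseSatOn.union_piecewise_right {C : Clause σ} (h : ClauseSatOn D ρ C)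
    (hCV : Disjoint (clauseVars C) V) : ClauseSatOn (V ∪ D) (V.piecewise α ρ) C :=
  let ⟨l, hl, hlD, hlρ⟩ := h
  have hlV : l.1 ∉ V := Finset.disjoint_left.mp hCV (Finset.mem_image_of_mem _ hl)
  ⟨l, hl, Finset.mem_union_right _ hlD, by rw [Finset.piecewise_eq_of_notMem _ _ _ hlV, hlρ]⟩

lemma Respects.union_piecewise {E : CNF σ} (hV : Respects V α E) (hD : Respects D ρ E) :
    Respects (V ∪ D) (V.piecewise α ρ) E := by
  intro C hC hmeet
  by_cases hCV : Disjoint (clauseVars C) V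
  · refine ClauseSatOn.union_piecewise_right (hD C hC ?_) hCV
    obtain ⟨x, hx⟩ := hmeet
    obtain ⟨hxC, hxVD⟩ := Finset.mem_inter.mp hx
    have hxV : x ∉ V := Finset.disjoint_left.mp hCV hxC
    exact ⟨x, Finset.mem_inter.mpr ⟨hxC, (Finset.mem_union.mp hxVD).resolve_left hxV⟩⟩
  · exact ClauseSatOn.union_piecewise_left (hV C hC (Finset.not_disjoint_iff_nonempty_inter.mp hCV))

variable (S : FVStructure σ) (s : ℕ) (𝒱' : Finset (Finset σ))

lemma subset_suppV {𝔜 : Finset (CNF σ)} (h : Contained S s 𝒱' 𝔜) : 𝔜 ⊆ suppV S s 𝒱' :=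
  fun _ hF => Finset.mem_filter.mpr ⟨h.1 hF, 𝔜, h, hF⟩

lemma mem_rbdry_of_subset {𝔛 𝔜 : Finset (CNF σ)} (h : 𝔜 ⊆ 𝔛) {F : CNF σ} (hV : V ∈ S.vfam)
    (hF : F ∈ 𝔜) (hRN : RNbr S.Ecnf F V) (huniq : ∀ F' ∈ 𝔛, F' ≠ F → ¬ Nbr F' V) :
    V ∈ rbdry S 𝔜 :=
  Finset.mem_filter.mpr ⟨hV, F, hF, hRN, fun F' hF' => huniq F' (h hF')⟩

lemma rbdry_suppV_subset : rbdry S (suppV S s 𝒱') ⊆ 𝒱' := by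
  intro V hV
  obtain ⟨hVfam, _, hF, hRN, huniq⟩ := Finset.mem_filter.mp hV
  obtain ⟨-, 𝔜, hcont, hF𝔜⟩ := Finset.mem_filter.mp hF
  exact hcont.2.2 (mem_rbdry_of_subset S (subset_suppV S s 𝒱' hcont) hVfam hF𝔜 hRN huniq)

lemma exists_mem_rbdry_notMem {𝔊 : Finset (CNF σ)} (hsub : 𝔊 ⊆ S.fam) (hcard : 𝔊.card ≤ s)
    (h : ¬ 𝔊 ⊆ suppV S s 𝒱') : ∃ V ∈ rbdry S 𝔊, V ∉ 𝒱' :=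
  Finset.not_subset.mp fun hbdry => h (subset_suppV S s 𝒱' ⟨hsub, hcard, hbdry⟩)

lemma exists_assignment_satisfying_outside_suppV (𝔊 : Finset (CNF σ)) (hsub : 𝔊 ⊆ S.fam)
    (hcard : 𝔊.card ≤ s) (hsupp : suppV S s 𝒱' ⊆ 𝔊) :
    ∃ (D : Finset σ) (ρ : σ → Bool), Respects D ρ S.Ecnf ∧
      (∀ x ∈ D, ∃ V ∈ S.vfam, V ∉ 𝒱' ∧ x ∈ V) ∧
      (∀ F ∈ suppV S s 𝒱', Disjoint (cnfVars F) D) ∧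
      ∀ F ∈ 𝔊, F ∉ suppV S s 𝒱' → ∀ C ∈ F, ClauseSatOn D ρ C := by
  induction 𝔊 using Finset.strongInduction with
  | H 𝔊 ih =>
    by_cases hdone : 𝔊 ⊆ suppV S s 𝒱'
    · exact ⟨∅, fun _ => false, fun C _ h => by simp at h, by simp, by simp,
        fun F hF hFn => absurd (hdone hF) hFn⟩
    obtain ⟨V, hVbdry, hV𝒱'⟩ := exists_mem_rbdry_notMem S s 𝒱' hsub hcard hdone
    obtain ⟨hVfam, F, hF, hRN, huniq⟩ := Finset.mem_filter.mp hVbdry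
    have hFsupp : F ∉ suppV S s 𝒱' := fun hFs =>
      hV𝒱' (rbdry_suppV_subset S s 𝒱' (mem_rbdry_of_subset S hsupp hVfam hFs hRN huniq))
    have hVdisj : ∀ F' ∈ 𝔊, F' ≠ F → Disjoint (cnfVars F') V := fun F' hF' hne =>
      Finset.disjoint_iff_inter_eq_empty.mpr
        (Finset.not_nonempty_iff_eq_empty.mp (huniq F' hF' hne))
    obtain ⟨α, hαresp, hαsat⟩ := hRN.2
    obtain ⟨D, ρ, hresp, hcover, hsuppD, hsat⟩ := ih (𝔊.erase F) (Finset.erase_ssubset hF)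
      ((Finset.erase_subset F 𝔊).trans hsub)
      ((Finset.card_le_card (Finset.erase_subset F 𝔊)).trans hcard)
      fun F' hF' => Finset.mem_erase.mpr ⟨fun h => hFsupp (h ▸ hF'), hsupp hF'⟩
    refine ⟨V ∪ D, V.piecewise α ρ, hαresp.union_piecewise hresp, fun x hx => ?_,
      fun F' hF' => ?_, fun F' hF' hF'supp C hC => ?_⟩
    · rcases Finset.mem_union.mp hx with hxV | hxD
      · exact ⟨V, hVfam, hV𝒱', hxV⟩
      · exact hcover x hxD
    · exact Finset.disjoint_union_right.mpr
        ⟨hVdisj F' (hsupp hF') fun h => hFsupp (h ▸ hF'), hsuppD F' hF'⟩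
    · rcases eq_or_ne F' F with rfl | hne
      · exact ClauseSatOn.union_piecewise_left (hαsat C hC)
      · exact ClauseSatOn.union_piecewise_right
          (hsat F' (Finset.mem_erase.mpr ⟨hne, hF'⟩) hF'supp C hC)
          ((hVdisj F' hF' hne).mono_left (clauseVars_subset_cnfVars hC))

end Peeling

section Term

variable {σ 𝔽 : Type} [DecidableEq σ] [CommRing 𝔽]

lemma monoOf_apply (m : Finset σ) (x : σ) : monoOf m x = if x ∈ m then 1 else 0 := by
  simp [monoOf, Finsupp.finsetSum_apply, Finsupp.single_apply]

lemma support_monoOf (m : Finset σ) : (monoOf m).support = m := by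
  ext x
  simp [monoOf_apply]

lemma mlin_monomial_monoOf (m : Finset σ) (a : 𝔽) :
    mlin (monomial (monoOf m) a) = monomial (monoOf m) a := by
  rw [mlin_monomial, truncExp_eq_self fun x => by rw [monoOf_apply]; split <;> simp]

lemma vars_monomial_monoOf_subset (m : Finset σ) (a : 𝔽) : (monomial (monoOf m) a).vars ⊆ m := by
  intro x hx
  obtain ⟨d, hd, hxd⟩ := (mem_vars_iff_mem_support x).mp hx
  rwa [Finset.mem_singleton.mp (support_monomial_subset hd), support_monoOf] at hxd

end Term

theorem stmt8_general {𝔽 σ : Type} [Field 𝔽] [Fintype σ] [DecidableEq σ]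
    (ord : AdmissibleOrder σ) (S : FVStructure σ) (s : ℕ)
    (aT : 𝔽) (mT : Finset σ)
    (𝔛 : Finset (CNF σ)) (hsub : 𝔛 ⊆ S.fam)
    (hsupp : suppM S s mT ⊆ 𝔛) (hcard : 𝔛.card ≤ s) :
    redOp ord (idealOf 𝔽 S 𝔛) (MvPolynomial.monomial (monoOf mT) aT)
      = redOp ord (idealOf 𝔽 S (suppM S s mT)) (MvPolynomial.monomial (monoOf mT) aT) := by
  obtain ⟨D, ρ, hresp, hcover, hsuppD, hsat⟩ :=
    exists_assignment_satisfying_outside_suppV S s (nbrsM S mT) 𝔛 hsub hcard hsupp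
  have hTD : Disjoint (monomial (monoOf mT) aT).vars D := by
    refine Finset.disjoint_left.mpr fun x hxT hxD => ?_
    obtain ⟨V, hV, hVT, hxV⟩ := hcover x hxD
    exact hVT (Finset.mem_filter.mpr
      ⟨hV, x, Finset.mem_inter.mpr ⟨vars_monomial_monoOf_subset mT aT hxT, hxV⟩⟩)
  have hstab (Q) (hQ : Q ∈ idealOf 𝔽 S 𝔛) : restrictPoly D ρ Q ∈ idealOf 𝔽 S (suppM S s mT) :=
    restrictPoly_mem_idealOf S hresp hsuppD hsat hQ
  have hI := isMLIdeal_idealOf (𝔽 := 𝔽) S (suppM S s mT)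
  obtain ⟨R, hR, hRD⟩ := exists_isReduction_disjoint ord hI
    (fun Q hQ => hstab Q (idealOf_mono S hsupp hQ)) (mlin_monomial_monoOf mT aT) hTD
  rw [redOp_eq ord hI hR, redOp_eq ord (isMLIdeal_idealOf S 𝔛)
    (hR.of_restrictPoly_mem ord hI (idealOf_mono S hsupp) hstab hRD)]

/-- let `T = aT·∏_{x∈mT} x` be a term and suppose `𝔛 ⊆ 𝔉` satisfies
`Sup_s(T) ⊆ 𝔛` and `|𝔛| ≤ s`. Then `R_{I(𝔛∧E)}(T) = R_{I(Sup_s(T)∧E)}(T)`. -/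
theorem stmt8 {𝔽 σ : Type} [Field 𝔽] [Fintype σ] [DecidableEq σ]
    (ord : AdmissibleOrder σ) (S : FVStructure σ) (s : ℕ)
    (aT : 𝔽) (haT : aT ≠ 0) (mT : Finset σ)
    (𝔛 : Finset (CNF σ)) (hsub : 𝔛 ⊆ S.fam)
    (hsupp : suppM S s mT ⊆ 𝔛) (hcard : 𝔛.card ≤ s) :
    redOp ord (idealOf 𝔽 S 𝔛) (MvPolynomial.monomial (monoOf mT) aT)
      = redOp ord (idealOf 𝔽 S (suppM S s mT)) (MvPolynomial.monomial (monoOf mT) aT) :=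
  stmt8_general ord S s aT mT 𝔛 hsub hsupp hcard
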